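/- arXiv:2309.07897 — 2 statements merged into one kernel-verified Lean document; each statement's English description precedes it below -/
import Mathlib

section
/- Let E be a finite-dimensional real normed vector space and let g : E → E be nonexpansive, i.e., ‖g(x) − g(y)‖ ≤ ‖x − y‖ for all x, y ∈ E. Assume the fixed-point set {x ∈ E : g(x) = x} is nonempty. Then for any γ ∈ (0,1) and any initial point x⁰ ∈ E, the Krasnoselskii–Mann iteration x^{k+1} = (1 − γ) x^k + γ g(x^k) converges to some fixed point x* of g. -/
/-!
The averaged map `T = (1 - γ) id + γ g` is nonexpansive and fixes every fixed point of `g`, so the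
distance from the iterates to any fixed point is nonincreasing (Fejér monotonicity). In finite
dimension the bounded orbit has a convergent subsequence, and Fejér monotonicity upgrades this to
convergence of the whole orbit as soon as the limit `y` is a fixed point. The residual `‖g z - z‖`
decreases along the orbit to some `r`, and by continuity it equals `r` at every point of the orbit
of `y`. Along an orbit with constant residual `r`, Ishikawa's induction gives
`‖g (T^[i + n] y) - T^[i] y‖ ≥ (1 + n γ) r`, which contradicts boundedness of the orbit unless
`r = 0`.
-/

open Filter Topology Function Metric

section PseudoMetric

variable {α : Type*} [PseudoMetricSpace α]

theorem LipschitzWith.antitone_dist_iterate {f : α → α} (hf : LipschitzWith 1 f) (a b : α) :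
    Antitone fun n => dist (f^[n] a) (f^[n] b) :=
  antitone_nat_of_succ_le fun n => by
    simpa only [iterate_succ_apply', NNReal.coe_one, one_mul] using hf.dist_le_mul _ _

theorem tendsto_of_antitone_dist_of_tendsto_comp {x : ℕ → α} {y : α}
    (hx : Antitone fun n => dist (x n) y) {φ : ℕ → ℕ} (h : Tendsto (x ∘ φ) atTop (𝓝 y)) :
    Tendsto x atTop (𝓝 y) := by
  rw [Metric.tendsto_atTop] at h ⊢
  intro ε hε
  obtain ⟨N, hN⟩ := h ε hε
  exact ⟨φ N, fun n hn => (hx hn).trans_lt (hN N le_rfl)⟩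

end PseudoMetric

section NormedSpace

variable {E : Type*} [NormedAddCommGroup E] [NormedSpace ℝ E]

theorem norm_smul_add_smul_le {a b : ℝ} (ha : 0 ≤ a) (hb : 0 ≤ b) (u v : E) :
    ‖a • u + b • v‖ ≤ a * ‖u‖ + b * ‖v‖ :=
  (norm_add_le _ _).trans_eq <| by rw [norm_smul_of_nonneg ha, norm_smul_of_nonneg hb]

def averagedMap (γ : ℝ) (g : E → E) (z : E) : E := (1 - γ) • z + γ • g z

variable {γ : ℝ} {g : E → E}

theorem averagedMap_sub_self (z : E) : averagedMap γ g z - z = γ • (g z - z) := by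
  unfold averagedMap; module

theorem Function.IsFixedPt.averagedMap {z : E} (hz : IsFixedPt g z) (γ : ℝ) :
    IsFixedPt (averagedMap γ g) z := by
  unfold IsFixedPt _root_.averagedMap; rw [hz]; module

theorem lipschitzWith_one_averagedMap (hg : LipschitzWith 1 g) (hγ0 : 0 ≤ γ) (hγ1 : γ ≤ 1) :
    LipschitzWith 1 (averagedMap γ g) := by
  refine LipschitzWith.mk_one fun z w => ?_
  have hdiff : averagedMap γ g z - averagedMap γ g w = (1 - γ) • (z - w) + γ • (g z - g w) := by
    unfold averagedMap; module
  have hgzw : ‖g z - g w‖ ≤ ‖z - w‖ := by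
    simpa only [dist_eq_norm, NNReal.coe_one, one_mul] using hg.dist_le_mul z w
  rw [dist_eq_norm, dist_eq_norm, hdiff]
  calc _ ≤ (1 - γ) * ‖z - w‖ + γ * ‖g z - g w‖ := norm_smul_add_smul_le (by linarith) hγ0 _ _
    _ ≤ (1 - γ) * ‖z - w‖ + γ * ‖z - w‖ := by gcongr
    _ = ‖z - w‖ := by ring

theorem norm_iterate_averagedMap_sub_le (hγ0 : 0 ≤ γ) {y : E} {r : ℝ}
    (hr : ∀ m, ‖g ((averagedMap γ g)^[m] y) - (averagedMap γ g)^[m] y‖ ≤ r) (i n : ℕ) :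
    ‖(averagedMap γ g)^[i + n] y - (averagedMap γ g)^[i] y‖ ≤ n * (γ * r) := by
  rw [← dist_eq_norm, dist_comm]
  refine (dist_le_Ico_sum_of_dist_le (f := fun m => (averagedMap γ g)^[m] y) (d := fun _ => γ * r)
    (Nat.le_add_right i n) fun {k} _ _ => ?_).trans_eq ?_
  · rw [dist_comm, dist_eq_norm, iterate_succ_apply', averagedMap_sub_self,
      norm_smul_of_nonneg hγ0]
    exact mul_le_mul_of_nonneg_left (hr k) hγ0
  · simp

theorem le_norm_apply_iterate_averagedMap_sub (hg : LipschitzWith 1 g) (hγ0 : 0 ≤ γ)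
    (hγ1 : γ < 1) {y : E} {r : ℝ}
    (hr : ∀ m, ‖g ((averagedMap γ g)^[m] y) - (averagedMap γ g)^[m] y‖ = r) (n i : ℕ) :
    (1 + n * γ) * r ≤ ‖g ((averagedMap γ g)^[i + n] y) - (averagedMap γ g)^[i] y‖ := by
  set T := averagedMap γ g
  induction n generalizing i with
  | zero => simp [hr]
  | succ n ih =>
    set u := T^[i] y
    set v := T^[i + (n + 1)] y
    have hih : (1 + n * γ) * r ≤ ‖g v - T u‖ := by
      simpa only [show i + 1 + n = i + (n + 1) by omega, iterate_succ_apply'] using ih (i + 1)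
    have hsplit : g v - T u = (1 - γ) • (g v - u) + γ • (g v - g u) := by
      simp only [T, averagedMap]; module
    have hstep : ‖g v - T u‖ ≤ (1 - γ) * ‖g v - u‖ + γ * ((n + 1) * (γ * r)) := by
      rw [hsplit]
      refine (norm_smul_add_smul_le (by linarith) hγ0 _ _).trans (add_le_add_right ?_ _)
      calc γ * ‖g v - g u‖ ≤ γ * ‖v - u‖ := by
            gcongr; simpa only [dist_eq_norm, NNReal.coe_one, one_mul] using hg.dist_le_mul v u
        _ ≤ γ * ((n + 1) * (γ * r)) := by
            gcongr
            exact_mod_cast norm_iterate_averagedMap_sub_le hγ0 (fun m => (hr m).le) i (n + 1)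
    refine le_of_mul_le_mul_left ?_ (sub_pos.2 hγ1)
    push_cast
    -- `(1 - γ) (1 + (n + 1) γ) = (1 + n γ) - (n + 1) γ²`
    linarith

theorem eq_zero_of_norm_apply_iterate_averagedMap_sub_eq (hg : LipschitzWith 1 g) (hγ0 : 0 < γ)
    (hγ1 : γ < 1) {y : E} {r : ℝ}
    (hr : ∀ m, ‖g ((averagedMap γ g)^[m] y) - (averagedMap γ g)^[m] y‖ = r)
    (hb : Bornology.IsBounded (Set.range fun m => (averagedMap γ g)^[m] y)) : r = 0 := by
  set T := averagedMap γ g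
  obtain ⟨C, hC⟩ := isBounded_iff_forall_norm_le.1 hb
  have hbound : ∀ n : ℕ, n * (γ * r) ≤ 2 * C := by
    intro n
    have hlower := le_norm_apply_iterate_averagedMap_sub hg hγ0.le hγ1 hr n 0
    have hupper : ‖g (T^[n] y) - y‖ ≤ r + 2 * C :=
      calc _ ≤ ‖g (T^[n] y) - T^[n] y‖ + (‖T^[n] y‖ + ‖y‖) :=
            (norm_sub_le_norm_sub_add_norm_sub _ _ _).trans (add_le_add_right (norm_sub_le _ _) _)
        _ ≤ r + (C + C) := add_le_add (hr n).le (add_le_add (hC _ ⟨n, rfl⟩) (hC _ ⟨0, rfl⟩))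
        _ = r + 2 * C := by ring
    simp only [zero_add, iterate_zero_apply] at hlower
    linarith
  by_contra hne
  have hr : 0 < r := (hr 0 ▸ norm_nonneg _ : 0 ≤ r).lt_of_ne' hne
  obtain ⟨n, hn⟩ := exists_nat_gt (2 * C / (γ * r))
  rw [div_lt_iff₀ (by positivity)] at hn
  linarith [hbound n]

theorem isFixedPt_of_tendsto_iterate_averagedMap_comp (hg : LipschitzWith 1 g) (hγ0 : 0 < γ)
    (hγ1 : γ < 1) {p : E} (hp : IsFixedPt g p) {x₀ y : E} {φ : ℕ → ℕ} (hφ : StrictMono φ)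
    (hy : Tendsto (fun j => (averagedMap γ g)^[φ j] x₀) atTop (𝓝 y)) : IsFixedPt g y := by
  set T := averagedMap γ g
  have hT : LipschitzWith 1 T := lipschitzWith_one_averagedMap hg hγ0.le hγ1.le
  set ρ : E → ℝ := fun z => ‖g z - z‖
  have hρ : Continuous ρ := (hg.continuous.sub continuous_id).norm
  have hdist : ∀ k, dist (T^[k] x₀) (T^[k] (T x₀)) = γ * ρ (T^[k] x₀) := fun k => by
    rw [← iterate_succ_apply, iterate_succ_apply', dist_comm, dist_eq_norm,
      averagedMap_sub_self, norm_smul_of_nonneg hγ0.le]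
  have hanti : Antitone fun k => ρ (T^[k] x₀) := fun m n hmn =>
    le_of_mul_le_mul_left (by simpa only [hdist] using hT.antitone_dist_iterate x₀ (T x₀) hmn) hγ0
  obtain ⟨r, hr⟩ : ∃ r, Tendsto (fun k => ρ (T^[k] x₀)) atTop (𝓝 r) :=
    ⟨_, tendsto_atTop_ciInf hanti ⟨0, fun _ ⟨_, hk⟩ => hk ▸ norm_nonneg _⟩⟩
  have hconst : ∀ m, ρ (T^[m] y) = r := fun m => by
    have hshift : Tendsto (fun j => T^[m] (T^[φ j] x₀)) atTop (𝓝 (T^[m] y)) :=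
      ((hT.continuous.iterate m).tendsto y).comp hy
    simp only [← iterate_add_apply] at hshift
    exact tendsto_nhds_unique ((hρ.tendsto _).comp hshift)
      (hr.comp (tendsto_atTop_mono (fun j => Nat.le_add_left _ m) hφ.tendsto_atTop))
  have hTp : ∀ m, T^[m] p = p := fun m => (hp.averagedMap γ).iterate m
  have hbdd : Bornology.IsBounded (Set.range fun m => T^[m] y) :=
    isBounded_closedBall.subset <| Set.range_subset_iff.2 fun m => by
      simpa only [mem_closedBall, hTp, iterate_zero_apply] using
        hT.antitone_dist_iterate y p (Nat.zero_le m)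
  have hr0 : r = 0 := eq_zero_of_norm_apply_iterate_averagedMap_sub_eq hg hγ0 hγ1 hconst hbdd
  exact sub_eq_zero.1 (norm_eq_zero.1 (hr0 ▸ hconst 0))

end NormedSpace

/-- Krasnoselskii–Mann iteration: for a nonexpansive self-map `g` of a
finite-dimensional real normed space with a nonempty fixed-point set, the
averaged iteration `x^{k+1} = (1-γ) x^k + γ g(x^k)` with `γ ∈ (0,1)` converges
to some fixed point of `g`, from any initial point. -/
theorem km_iteration_converges
    {E : Type*} [NormedAddCommGroup E] [NormedSpace ℝ E] [FiniteDimensional ℝ E]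
    (g : E → E)
    (hg : ∀ x y : E, ‖g x - g y‖ ≤ ‖x - y‖)
    (hfix : ∃ x : E, g x = x)
    (γ : ℝ) (hγ0 : 0 < γ) (hγ1 : γ < 1)
    (x : ℕ → E)
    (hx : ∀ k : ℕ, x (k + 1) = (1 - γ) • x k + γ • g (x k)) :
    ∃ xstar : E, g xstar = xstar ∧
      Filter.Tendsto x Filter.atTop (nhds xstar) := by
  obtain ⟨p, hp⟩ := hfix
  have hg : LipschitzWith 1 g := LipschitzWith.mk_one fun a b => by
    simpa only [dist_eq_norm] using hg a b
  have hT := lipschitzWith_one_averagedMap hg hγ0.le hγ1.le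
  have horbit : x = fun k => (averagedMap γ g)^[k] (x 0) := funext fun k => by
    induction k with
    | zero => rfl
    | succ k ih => rw [hx, iterate_succ_apply', ← ih]; rfl
  have hfejer : ∀ q, IsFixedPt g q → Antitone fun k => dist (x k) q := fun q hq => by
    rw [horbit]
    simpa only [((hq.averagedMap γ).iterate _).eq] using hT.antitone_dist_iterate (x 0) q
  obtain ⟨y, -, φ, hφ, hlim⟩ := (isCompact_closedBall p (dist (x 0) p)).tendsto_subseq
    fun k => mem_closedBall.2 (hfejer p hp (Nat.zero_le k))
  have hy : IsFixedPt g y :=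
    isFixedPt_of_tendsto_iterate_averagedMap_comp hg hγ0 hγ1 hp hφ (by rwa [horbit] at hlim)
  exact ⟨y, hy, tendsto_of_antitone_dist_of_tendsto_comp (hfejer y hy) hlim⟩
end

section
/- (Fixed points of the algorithm operator are consensus Nash equilibria.) With the setup and assumptions (a)–(c) of Theorem 1 (costs J_i, partial gradients G_i, nonempty closed convex sets Ω_i with metric projections P_i, step-sizes 0 < α_i < 1/ℓ_{i,i}, and an N×N nonnegative row-stochastic matrix W with positive diagonal whose support digraph is strongly connected), define 𝒜 : (Fin N → E) → (Fin N → E) by: for j ≠ i, (𝒜𝐱)_{i,j} = Σ_l w_{il} 𝐱_{l,j}, and (𝒜𝐱)_{i,i} = P_i( Σ_l w_{il} 𝐱_{l,i} − α_i G_i( Σ_l w_{il} 𝐱_l ) ). Then 𝐱 is a fixed point of 𝒜 if and only if there exists a Nash equilibrium x* of the game such that 𝐱_i = x* for every i ∈ Fin N. -/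
/-
At a fixed point, block `j` of the estimates is, at every agent other than `j`, a `W`-weighted
average of that block over all agents. By the discrete maximum principle on the strongly connected
support digraph, such a family is constant, so all estimates agree. On a consensus vector the
operator reduces, for agent `i`, to one projected-gradient step `P i (x i - α i • G i x)`, and by
the variational characterization of the projection and the convexity of `J i` in its own block
its fixed points are exactly the minimizers of `J i` over `Ω i` in that block.
-/

open Set Finset
open scoped InnerProductSpace

section MaximumPrinciple

variable {ι : Type*} [Fintype ι] {W : ι → ι → ℝ}

lemma eq_of_forall_le_of_eq_sum_mul (hW0 : ∀ i j, 0 ≤ W i j) (hW1 : ∀ i, ∑ j, W i j = 1)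
    {f : ι → ℝ} {c b : ι} (hmax : ∀ l, f l ≤ f c) (hc : f c = ∑ l, W c l * f l)
    (hcb : 0 < W c b) : f b = f c := by
  have hsum : ∑ l, W c l * (f c - f l) = 0 := by
    simp only [mul_sub, Finset.sum_sub_distrib, ← Finset.sum_mul, hW1, one_mul, ← hc, sub_self]
  have hb := (Finset.sum_eq_zero_iff_of_nonneg fun l _ ↦
    mul_nonneg (hW0 c l) (sub_nonneg.2 (hmax l))).1 hsum b (mem_univ b)
  linarith [(mul_eq_zero.1 hb).resolve_left hcb.ne']

lemma le_of_forall_ne_eq_sum_mul (hW0 : ∀ i j, 0 ≤ W i j) (hW1 : ∀ i, ∑ j, W i j = 1)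
    {j : ι} (hreach : ∀ i, Relation.ReflTransGen (fun a b ↦ 0 < W b a) j i)
    {f : ι → ℝ} (hf : ∀ i ≠ j, f i = ∑ l, W i l * f l) (i : ι) : f i ≤ f j := by
  obtain ⟨c, -, hc⟩ := Finset.exists_max_image univ f ⟨j, mem_univ j⟩
  have hmax : ∀ l, f l ≤ f c := fun l ↦ hc l (mem_univ l)
  suffices ∀ b, Relation.ReflTransGen (fun a b ↦ 0 < W b a) j b → f b = f c → f j = f c from
    (this c (hreach c) rfl) ▸ hmax i
  intro b hjb
  induction hjb with
  | refl => exact id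
  | @tail a b _ hab ih =>
    intro hb
    by_cases hbj : b = j
    · exact hbj ▸ hb
    · exact ih ((eq_of_forall_le_of_eq_sum_mul hW0 hW1 (fun l ↦ (hmax l).trans hb.ge)
        (hf b hbj) hab).trans hb)

theorem eq_of_forall_ne_eq_sum_smul {E : Type*} [AddCommGroup E] [Module ℝ E]
    (hW0 : ∀ i j, 0 ≤ W i j) (hW1 : ∀ i, ∑ j, W i j = 1) {j : ι}
    (hreach : ∀ i, Relation.ReflTransGen (fun a b ↦ 0 < W b a) j i)
    {f : ι → E} (hf : ∀ i ≠ j, f i = ∑ l, W i l • f l) (i : ι) : f i = f j := by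
  have hle : ∀ φ : Module.Dual ℝ E, φ (f i) ≤ φ (f j) := fun φ ↦
    le_of_forall_ne_eq_sum_mul hW0 hW1 hreach (f := fun i ↦ φ (f i))
      (fun i hi ↦ by simp [hf i hi]) i
  rw [← sub_eq_zero, ← Module.forall_dual_apply_eq_zero_iff ℝ]
  intro φ
  have := hle (-φ)
  simp only [LinearMap.neg_apply, neg_le_neg_iff] at this
  rw [map_sub]
  linarith [hle φ]

end MaximumPrinciple

section Gradient

variable {F : Type*} [NormedAddCommGroup F] [InnerProductSpace ℝ F] [CompleteSpace F]
  {K : Set F} {f : F → ℝ} {g x y : F}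

lemma ConvexOn.inner_gradient_le_sub (hf : ConvexOn ℝ K f) (hx : x ∈ K) (hy : y ∈ K)
    (hg : HasGradientAt f g x) : ⟪g, y - x⟫_ℝ ≤ f y - f x := by
  have hline : HasDerivAt (f ∘ AffineMap.lineMap (k := ℝ) x y) ⟪g, y - x⟫_ℝ 0 := by
    have hg' : HasFDerivAt f (InnerProductSpace.toDual ℝ F g)
        (AffineMap.lineMap x y (0 : ℝ)) := by
      simpa using hg.hasFDerivAt
    simpa using hg'.comp_hasDerivAt (0 : ℝ) AffineMap.hasDerivAt_lineMap
  have hslope := (hf.comp_affineMap (AffineMap.lineMap x y)).le_slope_of_hasDerivAt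
    (x := 0) (y := 1) (by simpa) (by simpa) one_pos hline
  simpa [slope_def_field] using hslope

lemma ConvexOn.isMinOn_iff_forall_inner_gradient_nonneg (hf : ConvexOn ℝ K f) (hx : x ∈ K)
    (hg : HasGradientAt f g x) : IsMinOn f K x ↔ ∀ w ∈ K, 0 ≤ ⟪g, w - x⟫_ℝ := by
  refine ⟨fun hmin w hw ↦ ?_, fun h ↦ isMinOn_iff.2 fun w hw ↦ ?_⟩
  · simpa using hmin.localize.hasFDerivWithinAt_nonneg hg.hasFDerivAt.hasFDerivWithinAt
      (sub_mem_posTangentConeAt_of_segment_subset (hf.1.segment_subset hx hw))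
  · linarith [h w hw, hf.inner_gradient_le_sub hx hw hg]

end Gradient

section Projection

variable {F : Type*} [NormedAddCommGroup F] [InnerProductSpace ℝ F] {K : Set F}

def IsProjectionOnto (K : Set F) (proj : F → F) : Prop :=
  ∀ u, proj u ∈ K ∧ ∀ w ∈ K, ⟪u - proj u, w - proj u⟫_ℝ ≤ 0

lemma eq_of_forall_inner_sub_nonpos {u p q : F}
    (hp : p ∈ K) (hp' : ∀ w ∈ K, ⟪u - p, w - p⟫_ℝ ≤ 0)
    (hq : q ∈ K) (hq' : ∀ w ∈ K, ⟪u - q, w - q⟫_ℝ ≤ 0) : p = q := by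
  have h : ‖q - p‖ ^ 2 ≤ 0 := by
    calc ‖q - p‖ ^ 2 = ⟪u - p, q - p⟫_ℝ + ⟪u - q, p - q⟫_ℝ := by
          rw [← neg_sub q p, inner_neg_right, ← sub_eq_add_neg, ← inner_sub_left,
            sub_sub_sub_cancel_left, real_inner_self_eq_norm_sq]
      _ ≤ 0 := add_nonpos (hp' q hq) (hq' p hp)
  simpa [sub_eq_zero, eq_comm] using h

namespace IsProjectionOnto

variable {proj : F → F}

lemma apply_eq_iff (hproj : IsProjectionOnto K proj) {u x : F} :
    proj u = x ↔ x ∈ K ∧ ∀ w ∈ K, ⟪u - x, w - x⟫_ℝ ≤ 0 :=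
  ⟨fun h ↦ h ▸ hproj u, fun ⟨hx, hx'⟩ ↦
    eq_of_forall_inner_sub_nonpos (hproj u).1 (hproj u).2 hx hx'⟩

lemma apply_sub_smul_eq_self_iff (hproj : IsProjectionOnto K proj) {x g : F} {α : ℝ}
    (hα : 0 < α) : proj (x - α • g) = x ↔ x ∈ K ∧ ∀ w ∈ K, 0 ≤ ⟪g, w - x⟫_ℝ := by
  simp only [hproj.apply_eq_iff, sub_sub_cancel_left, inner_neg_left, real_inner_smul_left,
    neg_nonpos, mul_nonneg_iff_of_pos_left hα]

lemma apply_sub_smul_eq_self_iff_isMinOn [CompleteSpace F] (hproj : IsProjectionOnto K proj)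
    {f : F → ℝ} {x g : F} {α : ℝ} (hf : ConvexOn ℝ K f) (hg : HasGradientAt f g x)
    (hα : 0 < α) :
    proj (x - α • g) = x ↔ x ∈ K ∧ IsMinOn f K x := by
  rw [hproj.apply_sub_smul_eq_self_iff hα]
  exact and_congr_right fun hx ↦ (hf.isMinOn_iff_forall_inner_gradient_nonneg hx hg).symm

end IsProjectionOnto

end Projection

theorem algorithm_operator_fixed_points_iff_consensus_NE_general
    {N : ℕ} (n : Fin N → ℕ)
    (Ω : ∀ i : Fin N, Set (EuclideanSpace ℝ (Fin (n i))))
    (hΩconv : ∀ i, Convex ℝ (Ω i))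
    (P : ∀ i : Fin N, EuclideanSpace ℝ (Fin (n i)) → EuclideanSpace ℝ (Fin (n i)))
    (hP : ∀ i (u : EuclideanSpace ℝ (Fin (n i))), P i u ∈ Ω i ∧
      ∀ w ∈ Ω i, (inner ℝ (u - P i u) (w - P i u) : ℝ) ≤ 0)
    (J : ∀ _ : Fin N, (∀ j, EuclideanSpace ℝ (Fin (n j))) → ℝ)
    (G : ∀ i : Fin N, (∀ j, EuclideanSpace ℝ (Fin (n j))) → EuclideanSpace ℝ (Fin (n i)))
    (μ : Fin N → ℝ) (ℓ : Fin N → Fin N → ℝ) (α : Fin N → ℝ)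
    -- `G i` is the partial gradient of `J i` with respect to the `i`-th block
    (hgrad : ∀ i (x : ∀ j, EuclideanSpace ℝ (Fin (n j))),
      HasGradientAt (fun u => J i (Function.update x i u)) (G i x) (x i))
    -- (a) strong convexity and Lipschitz gradient in the own variable
    (hμpos : ∀ i, 0 < μ i)
    (hstrconv : ∀ i (x : ∀ j, EuclideanSpace ℝ (Fin (n j))), ConvexOn ℝ Set.univ
      (fun u => J i (Function.update x i u) - μ i / 2 * ‖u‖ ^ 2))
    -- step-sizes
    (hα : ∀ i, 0 < α i ∧ α i < 1 / ℓ i i)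
    -- row-stochastic nonnegative weight matrix with positive diagonal and
    -- strongly connected support digraph
    (W : Matrix (Fin N) (Fin N) ℝ)
    (hWnonneg : ∀ i j, 0 ≤ W i j) (hWrow : ∀ i, ∑ j, W i j = 1)
    (hWconn : ∀ i j : Fin N, Relation.ReflTransGen (fun a b => 0 < W b a) j i)
    -- the algorithm operator 𝒜
    (A : (Fin N → ∀ j, EuclideanSpace ℝ (Fin (n j))) →
         (Fin N → ∀ j, EuclideanSpace ℝ (Fin (n j))))
    (hAoff : ∀ X i j, j ≠ i → A X i j = ∑ l, W i l • X l j)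
    (hAdiag : ∀ X i,
      A X i i = P i ((∑ l, W i l • X l i) - α i • G i (∑ l, W i l • X l)))
    (X : Fin N → ∀ j, EuclideanSpace ℝ (Fin (n j))) :
    A X = X ↔
      ∃ xstar : ∀ j, EuclideanSpace ℝ (Fin (n j)),
        ((∀ i, xstar i ∈ Ω i) ∧
          ∀ i, ∀ y ∈ Ω i, J i xstar ≤ J i (Function.update xstar i y)) ∧
        ∀ i, X i = xstar := by
  have hproj : ∀ i, IsProjectionOnto (Ω i) (P i) := hP
  have hconv : ∀ i x, ConvexOn ℝ (Ω i) (fun u ↦ J i (Function.update x i u)) := fun i x ↦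
    ((strongConvexOn_iff_convex.2 (hstrconv i x)).convexOn fun r ↦ by
      have := (hμpos i).le; positivity).subset (subset_univ _) (hΩconv i)
  have hA_const : ∀ x i, A (fun _ ↦ x) i = Function.update x i (P i (x i - α i • G i x)) := by
    intro x i
    funext j
    rcases eq_or_ne j i with rfl | hji
    · simp [hAdiag, ← Finset.sum_smul, hWrow]
    · simp [hAoff _ _ _ hji, ← Finset.sum_smul, hWrow, hji]
  have hfixed_const : ∀ x, A (fun _ ↦ x) = (fun _ ↦ x) ↔ ((∀ i, x i ∈ Ω i) ∧
      ∀ i, ∀ y ∈ Ω i, J i x ≤ J i (Function.update x i y)) := by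
    intro x
    simp only [funext_iff (f := A _), hA_const, Function.update_eq_self_iff, ← forall_and]
    refine forall_congr' fun i ↦ ?_
    rw [(hproj i).apply_sub_smul_eq_self_iff_isMinOn (hconv i x) (hgrad i x) (hα i).1,
      isMinOn_iff]
    simp only [Function.update_eq_self]
  constructor
  · intro hfix
    set x := fun j ↦ X j j
    have hcons : X = fun _ ↦ x := funext fun i ↦ funext fun j ↦
      eq_of_forall_ne_eq_sum_smul hWnonneg hWrow (hWconn · j)
        (fun i hi ↦ by rw [← hAoff X i j hi.symm, hfix]) i
    rw [hcons] at hfix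
    exact ⟨x, (hfixed_const x).1 hfix, congrFun hcons⟩
  · rintro ⟨x, hx, hX⟩
    obtain rfl : X = fun _ ↦ x := funext hX
    exact (hfixed_const x).2 hx

/-- Fixed points of the distributed algorithm operator `𝒜` are exactly the
consensus vectors `𝐱_i = x*` where `x*` is a Nash equilibrium of the game. -/
theorem algorithm_operator_fixed_points_iff_consensus_NE
    {N : ℕ} (hN : 1 ≤ N) (n : Fin N → ℕ)
    (Ω : ∀ i : Fin N, Set (EuclideanSpace ℝ (Fin (n i))))
    (hΩne : ∀ i, (Ω i).Nonempty) (hΩcl : ∀ i, IsClosed (Ω i))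
    (hΩconv : ∀ i, Convex ℝ (Ω i))
    (P : ∀ i : Fin N, EuclideanSpace ℝ (Fin (n i)) → EuclideanSpace ℝ (Fin (n i)))
    (hP : ∀ i (u : EuclideanSpace ℝ (Fin (n i))), P i u ∈ Ω i ∧
      ∀ w ∈ Ω i, (inner ℝ (u - P i u) (w - P i u) : ℝ) ≤ 0)
    (J : ∀ _ : Fin N, (∀ j, EuclideanSpace ℝ (Fin (n j))) → ℝ)
    (G : ∀ i : Fin N, (∀ j, EuclideanSpace ℝ (Fin (n j))) → EuclideanSpace ℝ (Fin (n i)))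
    (μ : Fin N → ℝ) (ℓ : Fin N → Fin N → ℝ) (α : Fin N → ℝ)
    -- `G i` is the partial gradient of `J i` with respect to the `i`-th block
    (hgrad : ∀ i (x : ∀ j, EuclideanSpace ℝ (Fin (n j))),
      HasGradientAt (fun u => J i (Function.update x i u)) (G i x) (x i))
    -- (a) strong convexity and Lipschitz gradient in the own variable
    (hμpos : ∀ i, 0 < μ i) (hμℓ : ∀ i, μ i ≤ ℓ i i)
    (hstrconv : ∀ i (x : ∀ j, EuclideanSpace ℝ (Fin (n j))), ConvexOn ℝ Set.univ
      (fun u => J i (Function.update x i u) - μ i / 2 * ‖u‖ ^ 2))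
    (hlip_own : ∀ i (x : ∀ j, EuclideanSpace ℝ (Fin (n j)))
        (u v : EuclideanSpace ℝ (Fin (n i))),
      ‖G i (Function.update x i u) - G i (Function.update x i v)‖ ≤ ℓ i i * ‖u - v‖)
    -- (b) Lipschitz continuity in the other blocks
    (hlip_other : ∀ i j, j ≠ i → ∀ (x : ∀ j', EuclideanSpace ℝ (Fin (n j')))
        (u v : EuclideanSpace ℝ (Fin (n j))),
      ‖G i (Function.update x j u) - G i (Function.update x j v)‖ ≤ ℓ i j * ‖u - v‖)
    -- (c) diagonal dominance
    (hdd : ∀ i, μ i ≥ ∑ j ∈ Finset.univ.erase i, ℓ i j)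
    -- step-sizes
    (hα : ∀ i, 0 < α i ∧ α i < 1 / ℓ i i)
    -- row-stochastic nonnegative weight matrix with positive diagonal and
    -- strongly connected support digraph
    (W : Matrix (Fin N) (Fin N) ℝ)
    (hWnonneg : ∀ i j, 0 ≤ W i j) (hWrow : ∀ i, ∑ j, W i j = 1)
    (hWdiag : ∀ i, 0 < W i i)
    (hWconn : ∀ i j : Fin N, Relation.ReflTransGen (fun a b => 0 < W b a) j i)
    -- the algorithm operator 𝒜
    (A : (Fin N → ∀ j, EuclideanSpace ℝ (Fin (n j))) →
         (Fin N → ∀ j, EuclideanSpace ℝ (Fin (n j))))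
    (hAoff : ∀ X i j, j ≠ i → A X i j = ∑ l, W i l • X l j)
    (hAdiag : ∀ X i,
      A X i i = P i ((∑ l, W i l • X l i) - α i • G i (∑ l, W i l • X l)))
    (X : Fin N → ∀ j, EuclideanSpace ℝ (Fin (n j))) :
    A X = X ↔
      ∃ xstar : ∀ j, EuclideanSpace ℝ (Fin (n j)),
        ((∀ i, xstar i ∈ Ω i) ∧
          ∀ i, ∀ y ∈ Ω i, J i xstar ≤ J i (Function.update xstar i y)) ∧
        ∀ i, X i = xstar :=
  algorithm_operator_fixed_points_iff_consensus_NE_general n Ω hΩconv P hP J G μ ℓ α hgrad hμpos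
    hstrconv hα W hWnonneg hWrow hWconn A hAoff hAdiag X
end
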